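/- arXiv:2210.08259 — 3 statements merged into one kernel-verified Lean document; each statement's English description precedes it below -/
import Mathlib

section
/- Assume: T > 0; d1, r1, a1 : ℝ → ℝ are continuous, positive, T-periodic; the kernel J1 : ℝ → ℝ is nonnegative, Lebesgue measurable, even (J1(x) = J1(−x)), satisfies ∫_ℝ J1(x) dx = 1 and ∫_ℝ J1(x)e^{−λx} dx < ∞ for every λ ∈ ℝ. Define γ1(μ) = (1/T)∫_0^T [d1(t)(∫_ℝ J1(y)e^{−μy} dy − 1) + a1(t)p(t)] dt for μ > 0. Then inf_{0 < μ < ∞} γ1(μ)/μ > 0. -/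
/-!
Write `γ₁(μ) = (D (M(μ) - 1) + A) / T` with `D = ∫₀ᵀ d₁ > 0`, `A = ∫₀ᵀ a₁ p > 0` and
`M(μ) = ∫ J₁(y) e^{-μy} dy`. Since `J₁` is even, `M(μ) = ∫ J₁(y) cosh(μy) dy`, and
`cosh x - 1 ≥ x² / 2` gives `M(μ) - 1 ≥ C μ² / 2` with `C = ∫ min(y², 1) J₁(y) dy > 0`
(the truncation keeps `C` finite). Hence, by AM-GM,
`γ₁(μ) / μ ≥ (C D μ / 2 + A / μ) / T ≥ √(2 A C D) / T`.
-/

open MeasureTheory Set Filter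

noncomputable def p0c (r a : ℝ → ℝ) (T : ℝ) : ℝ :=
  (Real.exp (∫ s in (0:ℝ)..T, r s) - 1) /
    ∫ s in (0:ℝ)..T, Real.exp (∫ τ in (0:ℝ)..s, r τ) * a s

noncomputable def pfun (r a : ℝ → ℝ) (T t : ℝ) : ℝ :=
  p0c r a T * Real.exp (∫ s in (0:ℝ)..t, r s) /
    (1 + p0c r a T * ∫ s in (0:ℝ)..t, Real.exp (∫ τ in (0:ℝ)..s, r τ) * a s)

open Real

lemma sq_div_two_le_cosh_sub_one (x : ℝ) : x ^ 2 / 2 ≤ cosh x - 1 := by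
  have hcosh : cosh x = 1 + 2 * sinh (x / 2) ^ 2 := by
    rw [← mul_div_cancel₀ x (two_ne_zero' ℝ), cosh_two_mul, cosh_sq']
    ring_nf
  have hsinh : (x / 2) ^ 2 ≤ sinh (x / 2) ^ 2 := by
    refine sq_le_sq.2 ?_
    rw [abs_sinh]
    exact self_le_sinh_iff.2 (abs_nonneg _)
  linarith

lemma sInf_image_div_pos_of_quadratic_le {g : ℝ → ℝ} {a b : ℝ} (ha : 0 < a) (hb : 0 < b)
    (hg : ∀ μ > 0, b * μ ^ 2 + a ≤ g μ) : 0 < sInf ((fun μ => g μ / μ) '' Ioi 0) := by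
  have hsq : √(a * b) ^ 2 = a * b := sq_sqrt (by positivity)
  refine (show 0 < 2 * √(a * b) by positivity).trans_le
    (le_csInf (nonempty_Ioi.image _) ?_)
  rintro _ ⟨μ, hμ : 0 < μ, rfl⟩
  rw [le_div_iff₀ hμ]
  -- AM-GM: `2 √(ab) μ ≤ b μ² + a`
  nlinarith [hg μ hμ, sq_nonneg (b * μ - √(a * b))]

section Kernel

variable {J : ℝ → ℝ}

lemma integrable_min_sq_one_mul (hJ : Integrable J) :
    Integrable fun y => min (y ^ 2) 1 * J y :=
  hJ.bdd_mul (c := 1) ((continuous_pow 2).min continuous_const).aestronglyMeasurable <|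
    .of_forall fun y => by
      rw [norm_of_nonneg (le_min (sq_nonneg y) zero_le_one)]
      exact min_le_right _ _

lemma integral_min_sq_one_mul_pos (hJ : Integrable J) (hJ_nonneg : ∀ x, 0 ≤ J x)
    (hJ_pos : 0 < ∫ x, J x) : 0 < ∫ y, min (y ^ 2) 1 * J y := by
  have hsupp : Function.support (fun y : ℝ => min (y ^ 2) 1 * J y) =
      Function.support J \ {0} := by
    have hmin (y : ℝ) : min (y ^ 2) 1 ≠ 0 ↔ y ≠ 0 :=
      ⟨by rintro h rfl; simp at h, fun hy => (lt_min (by positivity) one_pos).ne'⟩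
    ext y
    simp only [Function.mem_support, Set.mem_sdiff, mem_singleton_iff, mul_ne_zero_iff, hmin]
    tauto
  rw [integral_pos_iff_support_of_nonneg (fun y => mul_nonneg (by positivity) (hJ_nonneg y))
    (integrable_min_sq_one_mul hJ), hsupp, measure_sdiff_null (measure_singleton 0)]
  exact (integral_pos_iff_support_of_nonneg hJ_nonneg hJ).1 hJ_pos

variable (hJ_exp : ∀ l : ℝ, Integrable fun x => J x * exp (-l * x))
include hJ_exp

lemma integrable_mul_cosh (μ : ℝ) : Integrable fun y => J y * cosh (μ * y) := by
  have h := ((hJ_exp μ).add (hJ_exp (-μ))).div_const 2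
  refine h.congr (.of_forall fun y => ?_)
  simp only [Pi.add_apply, cosh_eq, neg_neg, neg_mul]
  ring

lemma integral_mul_exp_neg_eq_integral_mul_cosh (hJ_even : ∀ x, J x = J (-x)) (μ : ℝ) :
    ∫ y, J y * exp (-μ * y) = ∫ y, J y * cosh (μ * y) := by
  have hreflect : ∫ y, J y * exp (-(-μ) * y) = ∫ y, J y * exp (-μ * y) := by
    rw [← integral_neg_eq_self]
    simp only [neg_neg, neg_mul, mul_neg, ← hJ_even]
  have hsum : ∫ y, J y * cosh (μ * y) =
      ((∫ y, J y * exp (-μ * y)) + ∫ y, J y * exp (-(-μ) * y)) / 2 := by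
    rw [← integral_add (hJ_exp μ) (hJ_exp (-μ)), ← integral_div]
    congr 1 with y
    simp only [cosh_eq, neg_neg, neg_mul]
    ring
  rw [hsum, hreflect]
  ring

lemma sq_mul_integral_min_sq_one_mul_le (hJ_nonneg : ∀ x, 0 ≤ J x) (hJ_one : ∫ x, J x = 1)
    (hJ_even : ∀ x, J x = J (-x)) (μ : ℝ) :
    μ ^ 2 / 2 * ∫ y, min (y ^ 2) 1 * J y ≤ (∫ y, J y * exp (-μ * y)) - 1 := by
  have hJ : Integrable J := by simpa using hJ_exp 0
  have hpointwise (y : ℝ) : μ ^ 2 / 2 * (min (y ^ 2) 1 * J y) ≤ J y * cosh (μ * y) - J y :=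
    calc μ ^ 2 / 2 * (min (y ^ 2) 1 * J y) ≤ μ ^ 2 / 2 * (y ^ 2 * J y) := by
          gcongr
          · exact hJ_nonneg y
          · exact min_le_left _ _
      _ = (μ * y) ^ 2 / 2 * J y := by ring
      _ ≤ (cosh (μ * y) - 1) * J y :=
          mul_le_mul_of_nonneg_right (sq_div_two_le_cosh_sub_one _) (hJ_nonneg y)
      _ = J y * cosh (μ * y) - J y := by ring
  calc μ ^ 2 / 2 * ∫ y, min (y ^ 2) 1 * J y = ∫ y, μ ^ 2 / 2 * (min (y ^ 2) 1 * J y) :=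
        (integral_const_mul _ _).symm
    _ ≤ ∫ y, (J y * cosh (μ * y) - J y) :=
        integral_mono ((integrable_min_sq_one_mul hJ).const_mul _)
          ((integrable_mul_cosh hJ_exp μ).sub hJ) hpointwise
    _ = (∫ y, J y * exp (-μ * y)) - 1 := by
        rw [integral_sub (integrable_mul_cosh hJ_exp μ) hJ, hJ_one,
          integral_mul_exp_neg_eq_integral_mul_cosh hJ_exp hJ_even]

end Kernel

section PeriodicLogistic

variable {r a : ℝ → ℝ} {T : ℝ}

lemma continuous_integral_exp_primitive_mul (hr : Continuous r) (ha : Continuous a) :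
    Continuous fun t => ∫ s in (0:ℝ)..t, exp (∫ τ in (0:ℝ)..s, r τ) * a s :=
  have hR := intervalIntegral.continuous_primitive (μ := volume)
    (fun _ _ => hr.intervalIntegrable _ _) 0
  intervalIntegral.continuous_primitive
    (fun _ _ => ((continuous_exp.comp hR).mul ha).intervalIntegrable _ _) 0

lemma p0c_pos (hT : 0 < T) (hr : Continuous r) (hr_pos : ∀ t, 0 < r t) (ha : Continuous a)
    (ha_pos : ∀ t, 0 < a t) : 0 < p0c r a T := by
  have hR := intervalIntegral.continuous_primitive (μ := volume)
    (fun _ _ => hr.intervalIntegrable _ _) 0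
  refine div_pos ?_ (intervalIntegral.intervalIntegral_pos_of_pos
    (((continuous_exp.comp hR).mul ha).intervalIntegrable 0 T)
    (fun t => mul_pos (exp_pos _) (ha_pos t)) hT)
  rw [sub_pos, one_lt_exp_iff]
  exact intervalIntegral.intervalIntegral_pos_of_pos (hr.intervalIntegrable 0 T) hr_pos hT

variable (hp0 : 0 < p0c r a T) (ha_nonneg : ∀ t, 0 ≤ a t)
include hp0 ha_nonneg

lemma pfun_denominator_pos {t : ℝ} (ht : 0 ≤ t) :
    0 < 1 + p0c r a T * ∫ s in (0:ℝ)..t, exp (∫ τ in (0:ℝ)..s, r τ) * a s := by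
  have := intervalIntegral.integral_nonneg (μ := volume) ht fun s _ =>
    mul_nonneg (exp_pos (∫ τ in (0:ℝ)..s, r τ)).le (ha_nonneg s)
  positivity

lemma pfun_pos {t : ℝ} (ht : 0 ≤ t) : 0 < pfun r a T t :=
  div_pos (mul_pos hp0 (exp_pos _)) (pfun_denominator_pos hp0 ha_nonneg ht)

lemma intervalIntegrable_mul_pfun (hT : 0 ≤ T) (hr : Continuous r) (ha : Continuous a) :
    IntervalIntegrable (fun t => a t * pfun r a T t) volume 0 T := by
  refine ContinuousOn.intervalIntegrable (ha.continuousOn.mul ?_)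
  refine ContinuousOn.div (by fun_prop)
    (continuous_const.add (continuous_const.mul
      (continuous_integral_exp_primitive_mul hr ha))).continuousOn fun t ht => ?_
  rw [uIcc_of_le hT] at ht
  exact (pfun_denominator_pos hp0 ha_nonneg ht.1).ne'

lemma integral_mul_pfun_pos (hT : 0 < T) (hr : Continuous r) (ha : Continuous a)
    (ha_pos : ∀ t, 0 < a t) : 0 < ∫ t in (0:ℝ)..T, a t * pfun r a T t :=
  intervalIntegral.intervalIntegral_pos_of_pos_on
    (intervalIntegrable_mul_pfun hp0 ha_nonneg hT.le hr ha)
    (fun t ht => mul_pos (ha_pos t) (pfun_pos hp0 ha_nonneg ht.1.le)) hT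

end PeriodicLogistic

theorem stmt3 (T : ℝ) (hT : 0 < T) (d1 r1 a1 J1 : ℝ → ℝ)
    (hd1 : Continuous d1 ∧ (∀ t, 0 < d1 t) ∧ ∀ t, d1 (t + T) = d1 t)
    (hr1 : Continuous r1 ∧ (∀ t, 0 < r1 t) ∧ ∀ t, r1 (t + T) = r1 t)
    (ha1 : Continuous a1 ∧ (∀ t, 0 < a1 t) ∧ ∀ t, a1 (t + T) = a1 t)
    (hJ1 : Measurable J1 ∧ (∀ x, 0 ≤ J1 x) ∧ (∫ x, J1 x) = 1 ∧
      ∀ l : ℝ, Integrable fun x => J1 x * Real.exp (-l * x))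
    (hJ1even : ∀ x, J1 x = J1 (-x))
    :
    0 < sInf ((fun μ : ℝ =>
      ((1 / T) * ∫ t in (0:ℝ)..T,
        (d1 t * ((∫ y, J1 y * Real.exp (-μ * y)) - 1) + a1 t * pfun r1 a1 T t)) / μ)
      '' Set.Ioi 0) := by
  obtain ⟨hd_cont, hd_pos, -⟩ := hd1
  obtain ⟨hr_cont, hr_pos, -⟩ := hr1
  obtain ⟨ha_cont, ha_pos, -⟩ := ha1
  obtain ⟨-, hJ_nonneg, hJ_one, hJ_exp⟩ := hJ1
  have hJ : Integrable J1 := by simpa using hJ_exp 0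
  have hp0 := p0c_pos hT hr_cont hr_pos ha_cont ha_pos
  have ha_nonneg t := (ha_pos t).le
  set C := ∫ y, min (y ^ 2) 1 * J1 y
  set D := ∫ t in (0:ℝ)..T, d1 t
  set A := ∫ t in (0:ℝ)..T, a1 t * pfun r1 a1 T t
  have hC : 0 < C := integral_min_sq_one_mul_pos hJ hJ_nonneg (by rw [hJ_one]; exact one_pos)
  have hD : 0 < D :=
    intervalIntegral.intervalIntegral_pos_of_pos (hd_cont.intervalIntegrable 0 T) hd_pos hT
  have hA : 0 < A := integral_mul_pfun_pos hp0 ha_nonneg hT hr_cont ha_cont ha_pos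
  refine sInf_image_div_pos_of_quadratic_le (a := A / T) (b := C * D / (2 * T))
    (by positivity) (by positivity) fun μ _ => ?_
  have hM := sq_mul_integral_min_sq_one_mul_le hJ_exp hJ_nonneg hJ_one hJ1even μ
  rw [intervalIntegral.integral_add ((hd_cont.intervalIntegrable 0 T).mul_const _)
    (intervalIntegrable_mul_pfun hp0 ha_nonneg hT.le hr_cont ha_cont),
    intervalIntegral.integral_mul_const]
  calc C * D / (2 * T) * μ ^ 2 + A / T = 1 / T * (D * (μ ^ 2 / 2 * C) + A) := by ring
    _ ≤ 1 / T * (D * ((∫ y, J1 y * exp (-μ * y)) - 1) + A) := by gcongr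
end

section
/- Assume: T > 0; d1, d2, r1, r2, a1, a2, b1, b2 : ℝ → ℝ are continuous, positive, T-periodic; the kernels J1, J2 are nonnegative, Lebesgue measurable, satisfy ∫_ℝ Ji(x) dx = 1 and ∫_ℝ Ji(x)e^{−λx} dx < ∞ for every λ ∈ ℝ. Let (φ⁻, ψ⁻) and (φ⁺, ψ⁺) be, respectively, a bounded lower solution and a bounded upper solution of the cooperative Cauchy system on ℝ × [0, ∞), taking values in [0,1] × [0,1]. If φ⁻(x,0) ≤ φ⁺(x,0) and ψ⁻(x,0) ≤ ψ⁺(x,0) for all x ∈ ℝ, then φ⁻(x,t) ≤ φ⁺(x,t) and ψ⁻(x,t) ≤ ψ⁺(x,t) for all (x,t) ∈ ℝ × [0, ∞). -/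
/-!
Compare the exponentially weighted gaps `W = e^{-Lt} (φ⁻ - φ⁺)` and `Z = e^{-Lt} (ψ⁻ - ψ⁺)` on
`ℝ × [0, t]` with their supremum `M ≥ 0` (taken together with `0`). Let `K` bound the diffusion
rates and the Lipschitz constants of the reaction terms on `[0, t]`, and take `L = 2K + 1`. If
`M > 0`, then at every point where `W` comes within `δ` of `M` the differential inequalities force
`∂ₜW < 0`: the nonlocal term adds at most `K δ` because `J` is a probability density and `W ≤ M`
everywhere, the reaction term adds at most `2 K M` because it is Lipschitz in its own component
and nondecreasing in the other (the system is cooperative), and the weight subtracts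
`L (M - δ)`. The same holds for `Z`. Starting below `0`, neither gap can then ever reach
`M - δ`, which contradicts the choice of `M`. Since the supremum over `ℝ` need not be attained,
the argument works with near-maximal points instead of a maximum.
-/

open MeasureTheory Set Filter

/-- An upper solution of the cooperative Cauchy system on ℝ × (0, ∞). -/
def IsCauchyUpper (d1 d2 J1 J2 a1 b1 a2 b2 p q : ℝ → ℝ) (φ ψ : ℝ → ℝ → ℝ) : Prop :=
  Continuous (fun xt : ℝ × ℝ => φ xt.1 xt.2) ∧
  Continuous (fun xt : ℝ × ℝ => ψ xt.1 xt.2) ∧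
  ∀ x t : ℝ, 0 < t →
    ∃ φt ψt : ℝ,
      HasDerivAt (fun s => φ x s) φt t ∧ HasDerivAt (fun s => ψ x s) ψt t ∧
      d1 t * ((∫ y, J1 y * φ (x - y) t) - φ x t) +
        φ x t * (a1 t * p t * (1 - φ x t) - b1 t * q t * (1 - ψ x t)) ≤ φt ∧
      d2 t * ((∫ y, J2 y * ψ (x - y) t) - ψ x t) +
        (1 - ψ x t) * (a2 t * p t * φ x t - b2 t * q t * ψ x t) ≤ ψt

/-- A lower solution of the cooperative Cauchy system on ℝ × (0, ∞). -/
def IsCauchyLower (d1 d2 J1 J2 a1 b1 a2 b2 p q : ℝ → ℝ) (φ ψ : ℝ → ℝ → ℝ) : Prop :=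
  Continuous (fun xt : ℝ × ℝ => φ xt.1 xt.2) ∧
  Continuous (fun xt : ℝ × ℝ => ψ xt.1 xt.2) ∧
  ∀ x t : ℝ, 0 < t →
    ∃ φt ψt : ℝ,
      HasDerivAt (fun s => φ x s) φt t ∧ HasDerivAt (fun s => ψ x s) ψt t ∧
      φt ≤ d1 t * ((∫ y, J1 y * φ (x - y) t) - φ x t) +
        φ x t * (a1 t * p t * (1 - φ x t) - b1 t * q t * (1 - ψ x t)) ∧
      ψt ≤ d2 t * ((∫ y, J2 y * ψ (x - y) t) - ψ x t) +
        (1 - ψ x t) * (a2 t * p t * φ x t - b2 t * q t * ψ x t)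

theorem image_lt_of_hasDerivAt_neg_on_superlevel {g : ℝ → ℝ} {a b m : ℝ}
    (hg : ContinuousOn g (Icc a b)) (ha : g a < m)
    (hder : ∀ s ∈ Ioc a b, m ≤ g s → ∃ g', HasDerivAt g g' s ∧ g' < 0) :
    ∀ s ∈ Icc a b, g s < m := by
  intro s₀ hs₀
  by_contra! hs₀m
  set S := Icc a s₀ ∩ g ⁻¹' Ici m
  have hS : IsCompact S := isCompact_Icc.of_isClosed_subset
    ((hg.mono (Icc_subset_Icc_right hs₀.2)).preimage_isClosed_of_isClosed isClosed_Icc isClosed_Ici)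
    inter_subset_left
  -- `c` is the first time `g` reaches the level `m`
  set c := sInf S
  obtain ⟨⟨hac, hcs₀⟩, hmc⟩ : c ∈ S := hS.sInf_mem ⟨s₀, ⟨hs₀.1, le_rfl⟩, hs₀m⟩
  have hac : a < c := hac.lt_of_ne fun h => by rw [← h] at hmc; exact (ha.trans_le hmc).false
  have hmax : IsMaxOn g (Icc a c) c := by
    refine isMaxOn_iff.2 fun s hs => ?_
    by_contra! hgs
    have hcs : c ≤ s := csInf_le hS.bddBelow ⟨⟨hs.1, hs.2.trans hcs₀⟩, hmc.trans hgs.le⟩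
    exact hgs.ne (by rw [le_antisymm hs.2 hcs])
  obtain ⟨g', hg', hg'neg⟩ := hder c ⟨hac, hcs₀.trans hs₀.2⟩ hmc
  have hseg : segment ℝ c a ⊆ Icc a c := by rw [segment_symm, segment_eq_Icc hac.le]
  have := hmax.localize.hasFDerivWithinAt_nonpos hg'.hasFDerivAt.hasFDerivWithinAt
    (sub_mem_posTangentConeAt_of_segment_subset hseg)
  have : (a - c) * g' ≤ 0 := by simpa using this
  nlinarith

/-- A Lipschitz bound in the first variable combined with quasi-monotonicity (cooperativity) in the
second, on the unit square. -/
def CooperativeLipschitz (K : ℝ) (f : ℝ → ℝ → ℝ) : Prop :=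
  ∀ ⦃φ₁ ψ₁ φ₂ ψ₂ : ℝ⦄, φ₁ ∈ Icc (0:ℝ) 1 → ψ₁ ∈ Icc (0:ℝ) 1 → φ₂ ∈ Icc (0:ℝ) 1 →
    ψ₂ ∈ Icc (0:ℝ) 1 → f φ₁ ψ₁ - f φ₂ ψ₂ ≤ K * (|φ₁ - φ₂| + max (ψ₁ - ψ₂) 0)

theorem CooperativeLipschitz.mono {K K' : ℝ} {f : ℝ → ℝ → ℝ} (hf : CooperativeLipschitz K f)
    (hKK' : K ≤ K') : CooperativeLipschitz K' f := fun _ _ _ _ h₁ h₂ h₃ h₄ =>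
  (hf h₁ h₂ h₃ h₄).trans
    (mul_le_mul_of_nonneg_right hKK' (add_nonneg (abs_nonneg _) (le_max_right _ _)))

theorem CooperativeLipschitz.of_forall_sub_eq {K : ℝ} {f : ℝ → ℝ → ℝ}
    (hf : ∀ ⦃φ₁ ψ₁ φ₂ ψ₂ : ℝ⦄, φ₁ ∈ Icc (0:ℝ) 1 → ψ₁ ∈ Icc (0:ℝ) 1 → φ₂ ∈ Icc (0:ℝ) 1 →
      ψ₂ ∈ Icc (0:ℝ) 1 → ∃ A B, |A| ≤ K ∧ B ∈ Icc 0 K ∧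
        f φ₁ ψ₁ - f φ₂ ψ₂ = (φ₁ - φ₂) * A + B * (ψ₁ - ψ₂)) :
    CooperativeLipschitz K f := by
  intro φ₁ ψ₁ φ₂ ψ₂ h₁ h₂ h₃ h₄
  obtain ⟨A, B, hA, hB, heq⟩ := hf h₁ h₂ h₃ h₄
  rw [heq, mul_add]
  gcongr ?_ + ?_
  · calc (φ₁ - φ₂) * A ≤ |A| * |φ₁ - φ₂| := by rw [mul_comm, ← abs_mul]; exact le_abs_self _
      _ ≤ K * |φ₁ - φ₂| := by gcongr
  · calc B * (ψ₁ - ψ₂) ≤ B * max (ψ₁ - ψ₂) 0 := mul_le_mul_of_nonneg_left (le_max_left _ _) hB.1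
      _ ≤ K * max (ψ₁ - ψ₂) 0 := mul_le_mul_of_nonneg_right hB.2 (le_max_right _ _)

structure IsProbabilityDensity (J : ℝ → ℝ) : Prop where
  nonneg : ∀ y, 0 ≤ J y
  integrable : Integrable J
  integral_eq_one : ∫ y, J y = 1

theorem IsProbabilityDensity.integral_mul_le {J f : ℝ → ℝ} {C : ℝ} (hJ : IsProbabilityDensity J)
    (hJf : Integrable fun y => J y * f y) (hfC : ∀ y, f y ≤ C) : ∫ y, J y * f y ≤ C :=
  calc ∫ y, J y * f y ≤ ∫ y, J y * C :=
        integral_mono hJf (hJ.integrable.mul_const C)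
          fun y => mul_le_mul_of_nonneg_left (hfC y) (hJ.nonneg y)
    _ = C := by rw [integral_mul_const, hJ.integral_eq_one, one_mul]

theorem IsProbabilityDensity.integrable_mul {J f : ℝ → ℝ} (hJ : IsProbabilityDensity J)
    (hf : Continuous f) (hf01 : ∀ y, f y ∈ Icc (0:ℝ) 1) : Integrable fun y => J y * f y :=
  hJ.integrable.mul_bdd hf.aestronglyMeasurable <| ae_of_all _ fun y => by
    rw [Real.norm_eq_abs, abs_le]; exact ⟨by linarith [(hf01 y).1], (hf01 y).2⟩

def IsSubsolution (d J : ℝ → ℝ) (F : ℝ → ℝ → ℝ → ℝ) (u v : ℝ → ℝ → ℝ) : Prop :=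
  ∀ x s, 0 < s → ∃ u', HasDerivAt (fun r => u x r) u' s ∧
    u' ≤ d s * ((∫ y, J y * u (x - y) s) - u x s) + F s (u x s) (v x s)

def IsSupersolution (d J : ℝ → ℝ) (F : ℝ → ℝ → ℝ → ℝ) (u v : ℝ → ℝ → ℝ) : Prop :=
  ∀ x s, 0 < s → ∃ u', HasDerivAt (fun r => u x r) u' s ∧
    d s * ((∫ y, J y * u (x - y) s) - u x s) + F s (u x s) (v x s) ≤ u'

noncomputable def weightedGap (L : ℝ) (u₁ u₂ : ℝ → ℝ → ℝ) (x s : ℝ) : ℝ :=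
  Real.exp (-L * s) * (u₁ x s - u₂ x s)

section weightedGap

variable {L x s : ℝ} {u₁ u₂ : ℝ → ℝ → ℝ}

theorem weightedGap_nonpos_iff : weightedGap L u₁ u₂ x s ≤ 0 ↔ u₁ x s ≤ u₂ x s := by
  rw [weightedGap, ← mul_zero (Real.exp _), mul_le_mul_iff_of_pos_left (Real.exp_pos _), sub_nonpos]

theorem weightedGap_le_one (hL : 0 ≤ L) (hs : 0 ≤ s) (hu₁ : u₁ x s ∈ Icc (0:ℝ) 1)
    (hu₂ : u₂ x s ∈ Icc (0:ℝ) 1) : weightedGap L u₁ u₂ x s ≤ 1 :=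
  calc weightedGap L u₁ u₂ x s ≤ Real.exp (-L * s) * 1 :=
        mul_le_mul_of_nonneg_left (by linarith [hu₁.2, hu₂.1]) (Real.exp_pos _).le
    _ ≤ 1 := by rw [mul_one, Real.exp_le_one_iff]; nlinarith

theorem continuous_weightedGap (hu₁ : Continuous (Function.uncurry u₁))
    (hu₂ : Continuous (Function.uncurry u₂)) : Continuous fun r => weightedGap L u₁ u₂ x r := by
  unfold weightedGap
  have h : ∀ u : ℝ → ℝ → ℝ, Continuous (Function.uncurry u) → Continuous fun r => u x r :=
    fun u hu => hu.comp (continuous_const.prodMk continuous_id)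
  fun_prop

theorem hasDerivAt_weightedGap {u₁' u₂' : ℝ} (h₁ : HasDerivAt (fun r => u₁ x r) u₁' s)
    (h₂ : HasDerivAt (fun r => u₂ x r) u₂' s) :
    HasDerivAt (fun r => weightedGap L u₁ u₂ x r)
      (-L * weightedGap L u₁ u₂ x s + Real.exp (-L * s) * (u₁' - u₂')) s := by
  have hexp : HasDerivAt (fun r => Real.exp (-L * r)) (Real.exp (-L * s) * (-L)) s := by
    simpa using ((hasDerivAt_id s).const_mul (-L)).exp
  exact (hexp.mul (h₁.sub h₂)).congr_deriv (by simp only [weightedGap, Pi.sub_apply]; ring)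

theorem exp_mul_integral_sub_le {J : ℝ → ℝ} {M : ℝ} (hJ : IsProbabilityDensity J)
    (hu₁ : Continuous fun y => u₁ y s) (hu₂ : Continuous fun y => u₂ y s)
    (hu₁01 : ∀ y, u₁ y s ∈ Icc (0:ℝ) 1) (hu₂01 : ∀ y, u₂ y s ∈ Icc (0:ℝ) 1)
    (hM : ∀ y, weightedGap L u₁ u₂ y s ≤ M) :
    Real.exp (-L * s) * ((∫ y, J y * u₁ (x - y) s) - ∫ y, J y * u₂ (x - y) s) ≤ M := by
  have hi₁ : Integrable fun y => J y * u₁ (x - y) s :=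
    hJ.integrable_mul (hu₁.comp (continuous_sub_left x)) fun y => hu₁01 (x - y)
  have hi₂ : Integrable fun y => J y * u₂ (x - y) s :=
    hJ.integrable_mul (hu₂.comp (continuous_sub_left x)) fun y => hu₂01 (x - y)
  have heq : (fun y => J y * weightedGap L u₁ u₂ (x - y) s) =
      fun y => Real.exp (-L * s) * (J y * u₁ (x - y) s - J y * u₂ (x - y) s) := by
    ext y; unfold weightedGap; ring
  rw [← integral_sub hi₁ hi₂, ← integral_const_mul, ← heq]
  exact hJ.integral_mul_le (heq ▸ (hi₁.sub hi₂).const_mul _) fun y => hM (x - y)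

end weightedGap

theorem exp_mul_rhs_sub_le {K M δ E d I₁ I₂ a₁ a₂ b₁ b₂ : ℝ} {f : ℝ → ℝ → ℝ}
    (hf : CooperativeLipschitz K f) (hK : 0 ≤ K) (hd : d ∈ Icc 0 K) (hE : 0 ≤ E)
    (ha₁ : a₁ ∈ Icc (0:ℝ) 1) (hb₁ : b₁ ∈ Icc (0:ℝ) 1) (ha₂ : a₂ ∈ Icc (0:ℝ) 1)
    (hb₂ : b₂ ∈ Icc (0:ℝ) 1) (hδM : δ ≤ M) (hI : E * (I₁ - I₂) ≤ M)
    (hlo : M - δ ≤ E * (a₁ - a₂)) (hhi : E * (a₁ - a₂) ≤ M) (hb : E * (b₁ - b₂) ≤ M) :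
    E * ((d * (I₁ - a₁) + f a₁ b₁) - (d * (I₂ - a₂) + f a₂ b₂)) ≤ K * δ + 2 * K * M := by
  have hdiff : d * (E * (I₁ - I₂) - E * (a₁ - a₂)) ≤ K * δ :=
    calc d * (E * (I₁ - I₂) - E * (a₁ - a₂)) ≤ d * δ :=
          mul_le_mul_of_nonneg_left (by linarith) hd.1
      _ ≤ K * δ := mul_le_mul_of_nonneg_right hd.2 (by linarith)
  have hmax : max (E * (b₁ - b₂)) 0 = E * max (b₁ - b₂) 0 := by
    rw [mul_max_of_nonneg _ _ hE, mul_zero]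
  have hreact : E * (f a₁ b₁ - f a₂ b₂) ≤ K * (M + M) :=
    calc E * (f a₁ b₁ - f a₂ b₂) ≤ E * (K * (|a₁ - a₂| + max (b₁ - b₂) 0)) :=
          mul_le_mul_of_nonneg_left (hf ha₁ hb₁ ha₂ hb₂) hE
      _ = K * (|E * (a₁ - a₂)| + max (E * (b₁ - b₂)) 0) := by
          rw [abs_mul, abs_of_nonneg hE, hmax]; ring
      _ ≤ K * (M + M) := by
          gcongr
          · exact abs_le.2 ⟨by linarith, hhi⟩
          · exact max_le hb (by linarith)
  linarith

section Comparison

variable {t K M δ : ℝ} {d J : ℝ → ℝ} {F : ℝ → ℝ → ℝ → ℝ} {u₁ u₂ v₁ v₂ : ℝ → ℝ → ℝ}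

theorem exists_hasDerivAt_weightedGap_neg {x s : ℝ} (hK : 0 ≤ K) (hd : d s ∈ Icc 0 K)
    (hJ : IsProbabilityDensity J) (hF : CooperativeLipschitz K (F s))
    (hu₁ : Continuous fun y => u₁ y s) (hu₂ : Continuous fun y => u₂ y s)
    (hu₁01 : ∀ y, u₁ y s ∈ Icc (0:ℝ) 1) (hu₂01 : ∀ y, u₂ y s ∈ Icc (0:ℝ) 1)
    (hv₁01 : v₁ x s ∈ Icc (0:ℝ) 1) (hv₂01 : v₂ x s ∈ Icc (0:ℝ) 1)
    (hsub : IsSubsolution d J F u₁ v₁) (hsup : IsSupersolution d J F u₂ v₂) (hs : 0 < s)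
    (hδ : 0 < δ) (hδM : (3 * K + 1) * δ < M)
    (huM : ∀ y, weightedGap (2 * K + 1) u₁ u₂ y s ≤ M)
    (hvM : weightedGap (2 * K + 1) v₁ v₂ x s ≤ M)
    (hx : M - δ ≤ weightedGap (2 * K + 1) u₁ u₂ x s) :
    ∃ w', HasDerivAt (fun r => weightedGap (2 * K + 1) u₁ u₂ x r) w' s ∧ w' < 0 := by
  obtain ⟨u₁', hu₁', hle⟩ := hsub x s hs
  obtain ⟨u₂', hu₂', hge⟩ := hsup x s hs
  refine ⟨_, hasDerivAt_weightedGap hu₁' hu₂', ?_⟩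
  set E := Real.exp (-(2 * K + 1) * s)
  have hE : 0 ≤ E := (Real.exp_pos _).le
  have hrhs := exp_mul_rhs_sub_le hF hK hd hE (hu₁01 x) hv₁01 (hu₂01 x) hv₂01 (by nlinarith)
    (exp_mul_integral_sub_le (x := x) hJ hu₁ hu₂ hu₁01 hu₂01 huM) hx (huM x) hvM
  have hdt : E * (u₁' - u₂') ≤ K * δ + 2 * K * M :=
    (mul_le_mul_of_nonneg_left (by linarith) hE).trans hrhs
  have hdecay := mul_le_mul_of_nonneg_left hx (by linarith : (0:ℝ) ≤ 2 * K + 1)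
  linarith

theorem weightedGap_lt_sub_of_le (hK : 0 ≤ K) (hd : ∀ s ∈ Icc 0 t, d s ∈ Icc 0 K)
    (hJ : IsProbabilityDensity J) (hF : ∀ s ∈ Icc 0 t, CooperativeLipschitz K (F s))
    (hu₁ : Continuous (Function.uncurry u₁)) (hu₂ : Continuous (Function.uncurry u₂))
    (hu₁01 : ∀ x s, u₁ x s ∈ Icc (0:ℝ) 1) (hu₂01 : ∀ x s, u₂ x s ∈ Icc (0:ℝ) 1)
    (hv₁01 : ∀ x s, v₁ x s ∈ Icc (0:ℝ) 1) (hv₂01 : ∀ x s, v₂ x s ∈ Icc (0:ℝ) 1)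
    (hsub : IsSubsolution d J F u₁ v₁) (hsup : IsSupersolution d J F u₂ v₂)
    (hδ : 0 < δ) (hδM : (3 * K + 1) * δ < M)
    (huM : ∀ y, ∀ s ∈ Icc 0 t, weightedGap (2 * K + 1) u₁ u₂ y s ≤ M)
    (hvM : ∀ y, ∀ s ∈ Icc 0 t, weightedGap (2 * K + 1) v₁ v₂ y s ≤ M)
    {x : ℝ} (h₀ : u₁ x 0 ≤ u₂ x 0) :
    ∀ s ∈ Icc 0 t, weightedGap (2 * K + 1) u₁ u₂ x s < M - δ := by
  refine image_lt_of_hasDerivAt_neg_on_superlevel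
    (continuous_weightedGap hu₁ hu₂).continuousOn ?_ fun s hs hge => ?_
  · linarith [(weightedGap_nonpos_iff (L := 2 * K + 1)).2 h₀, mul_nonneg hK hδ.le]
  · have hs' := Ioc_subset_Icc_self hs
    exact exists_hasDerivAt_weightedGap_neg hK (hd s hs') hJ (hF s hs')
      (hu₁.comp (continuous_id.prodMk continuous_const))
      (hu₂.comp (continuous_id.prodMk continuous_const)) (hu₁01 · s) (hu₂01 · s)
      (hv₁01 x s) (hv₂01 x s) hsub hsup hs.1 hδ hδM (huM · s hs') (hvM x s hs') hge

theorem comparison_principle {d₁ d₂ J₁ J₂ : ℝ → ℝ} {F₁ F₂ : ℝ → ℝ → ℝ → ℝ}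
    {φ₁ ψ₁ φ₂ ψ₂ : ℝ → ℝ → ℝ} (ht : 0 ≤ t)
    (hd₁ : ∀ s ∈ Icc 0 t, d₁ s ∈ Icc 0 K) (hd₂ : ∀ s ∈ Icc 0 t, d₂ s ∈ Icc 0 K)
    (hJ₁ : IsProbabilityDensity J₁) (hJ₂ : IsProbabilityDensity J₂)
    (hF₁ : ∀ s ∈ Icc 0 t, CooperativeLipschitz K (F₁ s))
    (hF₂ : ∀ s ∈ Icc 0 t, CooperativeLipschitz K (F₂ s))
    (hφ₁ : Continuous (Function.uncurry φ₁)) (hψ₁ : Continuous (Function.uncurry ψ₁))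
    (hφ₂ : Continuous (Function.uncurry φ₂)) (hψ₂ : Continuous (Function.uncurry ψ₂))
    (hφ₁01 : ∀ x s, φ₁ x s ∈ Icc (0:ℝ) 1) (hψ₁01 : ∀ x s, ψ₁ x s ∈ Icc (0:ℝ) 1)
    (hφ₂01 : ∀ x s, φ₂ x s ∈ Icc (0:ℝ) 1) (hψ₂01 : ∀ x s, ψ₂ x s ∈ Icc (0:ℝ) 1)
    (hsub₁ : IsSubsolution d₁ J₁ F₁ φ₁ ψ₁) (hsub₂ : IsSubsolution d₂ J₂ F₂ ψ₁ φ₁)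
    (hsup₁ : IsSupersolution d₁ J₁ F₁ φ₂ ψ₂) (hsup₂ : IsSupersolution d₂ J₂ F₂ ψ₂ φ₂)
    (h₀ : ∀ x, φ₁ x 0 ≤ φ₂ x 0 ∧ ψ₁ x 0 ≤ ψ₂ x 0) :
    ∀ x, φ₁ x t ≤ φ₂ x t ∧ ψ₁ x t ≤ ψ₂ x t := by
  have hK : 0 ≤ K := (hd₁ 0 ⟨le_rfl, ht⟩).1.trans (hd₁ 0 ⟨le_rfl, ht⟩).2
  set L := 2 * K + 1
  set S : Set ℝ := insert 0 (range fun p : ℝ × Icc (0:ℝ) t =>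
    max (weightedGap L φ₁ φ₂ p.1 p.2) (weightedGap L ψ₁ ψ₂ p.1 p.2))
  have hS : BddAbove S := by
    refine ⟨1, ?_⟩
    rintro m (rfl | ⟨⟨x, s, hs⟩, rfl⟩)
    · exact zero_le_one
    · exact max_le (weightedGap_le_one (by linarith) hs.1 (hφ₁01 x s) (hφ₂01 x s))
        (weightedGap_le_one (by linarith) hs.1 (hψ₁01 x s) (hψ₂01 x s))
  set M := sSup S
  have hbound (x s) (hs : s ∈ Icc 0 t) :
      weightedGap L φ₁ φ₂ x s ≤ M ∧ weightedGap L ψ₁ ψ₂ x s ≤ M :=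
    max_le_iff.1 (le_csSup hS (mem_insert_of_mem _ ⟨(x, ⟨s, hs⟩), rfl⟩))
  have hM : M ≤ 0 := by
    by_contra! hM
    set δ := M / (3 * K + 2)
    have hδ : 0 < δ := by positivity
    have hδM : (3 * K + 1) * δ < M := by
      rw [mul_div_assoc', div_lt_iff₀ (by linarith)]; nlinarith
    have hMδ : M ≤ M - δ := by
      refine csSup_le ⟨0, mem_insert _ _⟩ ?_
      rintro m (rfl | ⟨⟨x, s, hs⟩, rfl⟩)
      · linarith [mul_nonneg hK hδ.le]
      · exact max_le
          (weightedGap_lt_sub_of_le hK hd₁ hJ₁ hF₁ hφ₁ hφ₂ hφ₁01 hφ₂01 hψ₁01 hψ₂01 hsub₁ hsup₁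
            hδ hδM (fun y s hs => (hbound y s hs).1) (fun y s hs => (hbound y s hs).2)
            (h₀ x).1 s hs).le
          (weightedGap_lt_sub_of_le hK hd₂ hJ₂ hF₂ hψ₁ hψ₂ hψ₁01 hψ₂01 hφ₁01 hφ₂01 hsub₂ hsup₂
            hδ hδM (fun y s hs => (hbound y s hs).2) (fun y s hs => (hbound y s hs).1)
            (h₀ x).2 s hs).le
    linarith
  intro x
  obtain ⟨hφ, hψ⟩ := hbound x t ⟨ht, le_rfl⟩
  exact ⟨weightedGap_nonpos_iff.1 (hφ.trans hM), weightedGap_nonpos_iff.1 (hψ.trans hM)⟩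

end Comparison

def reaction₁ (P Q φ ψ : ℝ) : ℝ := φ * (P * (1 - φ) - Q * (1 - ψ))

/-- The reaction term of the `ψ`-equation, written with its own unknown `ψ` first. -/
def reaction₂ (P Q ψ φ : ℝ) : ℝ := (1 - ψ) * (P * φ - Q * ψ)

theorem cooperativeLipschitz_reaction₁ {P Q : ℝ} (hP : 0 ≤ P) (hQ : 0 ≤ Q) :
    CooperativeLipschitz (P + Q) (reaction₁ P Q) := by
  refine CooperativeLipschitz.of_forall_sub_eq fun φ₁ ψ₁ φ₂ ψ₂ h₁ h₂ h₃ h₄ =>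
    ⟨P * (1 - φ₁ - φ₂) - Q * (1 - ψ₁), Q * φ₂, ?_, ?_, by unfold reaction₁; ring⟩
  · exact abs_le.2 ⟨by nlinarith [h₁.2, h₂.1, h₃.2], by nlinarith [h₁.1, h₂.2, h₃.1]⟩
  · exact ⟨mul_nonneg hQ h₃.1, by nlinarith [h₃.2]⟩

theorem cooperativeLipschitz_reaction₂ {P Q : ℝ} (hP : 0 ≤ P) (hQ : 0 ≤ Q) :
    CooperativeLipschitz (P + Q) (reaction₂ P Q) := by
  refine CooperativeLipschitz.of_forall_sub_eq fun ψ₁ φ₁ ψ₂ φ₂ h₁ h₂ h₃ h₄ =>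
    ⟨-(P * φ₂) - Q * (1 - ψ₁ - ψ₂), P * (1 - ψ₁), ?_, ?_, by unfold reaction₂; ring⟩
  · exact abs_le.2 ⟨by nlinarith [h₁.1, h₃.1, h₄.2], by nlinarith [h₁.2, h₃.2, h₄.1]⟩
  · exact ⟨mul_nonneg hP (by linarith [h₁.2]), by nlinarith [h₁.1]⟩

section PeriodicSolution

variable {r a : ℝ → ℝ} {T : ℝ}

theorem p0c_nonneg (hr : ∀ t, 0 ≤ r t) (ha : ∀ t, 0 ≤ a t) : 0 ≤ p0c r a T := by
  have hf : ∀ t, 0 ≤ Real.exp (∫ τ in (0:ℝ)..t, r τ) * a t :=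
    fun t => mul_nonneg (Real.exp_pos _).le (ha t)
  rcases le_total 0 T with hT | hT
  · exact div_nonneg (sub_nonneg.2 (Real.one_le_exp (intervalIntegral.integral_nonneg hT
      fun t _ => hr t))) (intervalIntegral.integral_nonneg hT fun t _ => hf t)
  · have hneg {g : ℝ → ℝ} (hg : ∀ t, 0 ≤ g t) : ∫ s in (0:ℝ)..T, g s ≤ 0 := by
      rw [intervalIntegral.integral_symm]
      exact neg_nonpos.2 (intervalIntegral.integral_nonneg hT fun t _ => hg t)
    exact div_nonneg_of_nonpos (sub_nonpos.2 (Real.exp_le_one_iff.2 (hneg hr))) (hneg hf)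

theorem one_add_p0c_mul_integral_pos (hr : ∀ t, 0 ≤ r t) (ha : ∀ t, 0 ≤ a t) {t : ℝ}
    (ht : 0 ≤ t) :
    0 < 1 + p0c r a T * ∫ s in (0:ℝ)..t, Real.exp (∫ τ in (0:ℝ)..s, r τ) * a s := by
  have hG : 0 ≤ ∫ s in (0:ℝ)..t, Real.exp (∫ τ in (0:ℝ)..s, r τ) * a s :=
    intervalIntegral.integral_nonneg ht fun s _ => mul_nonneg (Real.exp_pos _).le (ha s)
  have := p0c_nonneg hr ha (T := T)
  positivity

theorem pfun_nonneg (hr : ∀ t, 0 ≤ r t) (ha : ∀ t, 0 ≤ a t) {t : ℝ} (ht : 0 ≤ t) :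
    0 ≤ pfun r a T t :=
  div_nonneg (mul_nonneg (p0c_nonneg hr ha) (Real.exp_pos _).le)
    (one_add_p0c_mul_integral_pos hr ha ht).le

theorem continuousOn_pfun (hr : Continuous r) (hr₀ : ∀ t, 0 ≤ r t) (ha : Continuous a)
    (ha₀ : ∀ t, 0 ≤ a t) : ContinuousOn (pfun r a T) (Ici 0) := by
  have hR : Continuous fun t => ∫ s in (0:ℝ)..t, r s :=
    intervalIntegral.continuous_primitive (fun _ _ => hr.intervalIntegrable _ _) 0
  have hG : Continuous fun t => ∫ s in (0:ℝ)..t, Real.exp (∫ τ in (0:ℝ)..s, r τ) * a s :=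
    intervalIntegral.continuous_primitive (fun _ _ => (hR.rexp.mul ha).intervalIntegrable _ _) 0
  exact (continuous_const.mul hR.rexp).continuousOn.div
    (continuous_const.add (continuous_const.mul hG)).continuousOn
    fun t ht => (one_add_p0c_mul_integral_pos hr₀ ha₀ ht).ne'

end PeriodicSolution

section CauchySystem

variable {d1 d2 J1 J2 a1 b1 a2 b2 p q : ℝ → ℝ} {φ ψ : ℝ → ℝ → ℝ}

theorem IsCauchyLower.isSubsolution_fst (h : IsCauchyLower d1 d2 J1 J2 a1 b1 a2 b2 p q φ ψ) :
    IsSubsolution d1 J1 (fun s => reaction₁ (a1 s * p s) (b1 s * q s)) φ ψ := fun x s hs => by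
  obtain ⟨φ', -, hφ', -, hle, -⟩ := h.2.2 x s hs
  exact ⟨φ', hφ', hle⟩

theorem IsCauchyLower.isSubsolution_snd (h : IsCauchyLower d1 d2 J1 J2 a1 b1 a2 b2 p q φ ψ) :
    IsSubsolution d2 J2 (fun s => reaction₂ (a2 s * p s) (b2 s * q s)) ψ φ := fun x s hs => by
  obtain ⟨-, ψ', -, hψ', -, hle⟩ := h.2.2 x s hs
  exact ⟨ψ', hψ', hle⟩

theorem IsCauchyUpper.isSupersolution_fst (h : IsCauchyUpper d1 d2 J1 J2 a1 b1 a2 b2 p q φ ψ) :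
    IsSupersolution d1 J1 (fun s => reaction₁ (a1 s * p s) (b1 s * q s)) φ ψ := fun x s hs => by
  obtain ⟨φ', -, hφ', -, hge, -⟩ := h.2.2 x s hs
  exact ⟨φ', hφ', hge⟩

theorem IsCauchyUpper.isSupersolution_snd (h : IsCauchyUpper d1 d2 J1 J2 a1 b1 a2 b2 p q φ ψ) :
    IsSupersolution d2 J2 (fun s => reaction₂ (a2 s * p s) (b2 s * q s)) ψ φ := fun x s hs => by
  obtain ⟨-, ψ', -, hψ', -, hge⟩ := h.2.2 x s hs
  exact ⟨ψ', hψ', hge⟩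

end CauchySystem

theorem isProbabilityDensity_of_integrable_exp {J : ℝ → ℝ} (hJ₀ : ∀ x, 0 ≤ J x)
    (hJ₁ : ∫ x, J x = 1) (hJexp : ∀ l : ℝ, Integrable fun x => J x * Real.exp (-l * x)) :
    IsProbabilityDensity J :=
  ⟨hJ₀, by simpa using hJexp 0, hJ₁⟩

theorem stmt5_general (T : ℝ)
    (d1 d2 r1 r2 a1 a2 b1 b2 J1 J2 : ℝ → ℝ)
    (hd1 : Continuous d1 ∧ (∀ t, 0 < d1 t) ∧ ∀ t, d1 (t + T) = d1 t)
    (hd2 : Continuous d2 ∧ (∀ t, 0 < d2 t) ∧ ∀ t, d2 (t + T) = d2 t)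
    (hr1 : Continuous r1 ∧ (∀ t, 0 < r1 t) ∧ ∀ t, r1 (t + T) = r1 t)
    (hr2 : Continuous r2 ∧ (∀ t, 0 < r2 t) ∧ ∀ t, r2 (t + T) = r2 t)
    (ha1 : Continuous a1 ∧ (∀ t, 0 < a1 t) ∧ ∀ t, a1 (t + T) = a1 t)
    (ha2 : Continuous a2 ∧ (∀ t, 0 < a2 t) ∧ ∀ t, a2 (t + T) = a2 t)
    (hb1 : Continuous b1 ∧ (∀ t, 0 < b1 t) ∧ ∀ t, b1 (t + T) = b1 t)
    (hb2 : Continuous b2 ∧ (∀ t, 0 < b2 t) ∧ ∀ t, b2 (t + T) = b2 t)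
    (hJ1 : Measurable J1 ∧ (∀ x, 0 ≤ J1 x) ∧ (∫ x, J1 x) = 1 ∧
      ∀ l : ℝ, Integrable fun x => J1 x * Real.exp (-l * x))
    (hJ2 : Measurable J2 ∧ (∀ x, 0 ≤ J2 x) ∧ (∫ x, J2 x) = 1 ∧
      ∀ l : ℝ, Integrable fun x => J2 x * Real.exp (-l * x))
    (φm ψm φp ψp : ℝ → ℝ → ℝ)
    (hlow : IsCauchyLower d1 d2 J1 J2 a1 b1 a2 b2
      (fun t => pfun r1 a1 T t) (fun t => pfun r2 b2 T t) φm ψm)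
    (hup : IsCauchyUpper d1 d2 J1 J2 a1 b1 a2 b2
      (fun t => pfun r1 a1 T t) (fun t => pfun r2 b2 T t) φp ψp)
    (hm01 : ∀ x t, φm x t ∈ Set.Icc (0:ℝ) 1 ∧ ψm x t ∈ Set.Icc (0:ℝ) 1)
    (hp01 : ∀ x t, φp x t ∈ Set.Icc (0:ℝ) 1 ∧ ψp x t ∈ Set.Icc (0:ℝ) 1)
    (hinit : ∀ x : ℝ, φm x 0 ≤ φp x 0 ∧ ψm x 0 ≤ ψp x 0) :
    ∀ x t : ℝ, 0 ≤ t → φm x t ≤ φp x t ∧ ψm x t ≤ ψp x t := by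
  intro x t ht
  have hp (s) (hs : 0 ≤ s) : 0 ≤ pfun r1 a1 T s :=
    pfun_nonneg (fun t => (hr1.2.1 t).le) (fun t => (ha1.2.1 t).le) hs
  have hq (s) (hs : 0 ≤ s) : 0 ≤ pfun r2 b2 T s :=
    pfun_nonneg (fun t => (hr2.2.1 t).le) (fun t => (hb2.2.1 t).le) hs
  have hpc : ContinuousOn (pfun r1 a1 T) (Icc 0 t) := (continuousOn_pfun hr1.1
    (fun t => (hr1.2.1 t).le) ha1.1 (fun t => (ha1.2.1 t).le)).mono Icc_subset_Ici_self
  have hqc : ContinuousOn (pfun r2 b2 T) (Icc 0 t) := (continuousOn_pfun hr2.1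
    (fun t => (hr2.2.1 t).le) hb2.1 (fun t => (hb2.2.1 t).le)).mono Icc_subset_Ici_self
  obtain ⟨K, hK⟩ := isCompact_Icc.bddAbove_image (f := fun s => max (max (d1 s) (d2 s))
    (max (a1 s * pfun r1 a1 T s + b1 s * pfun r2 b2 T s)
      (a2 s * pfun r1 a1 T s + b2 s * pfun r2 b2 T s)))
    ((ContinuousOn.sup hd1.1.continuousOn hd2.1.continuousOn).sup
      (((ContinuousOn.mul ha1.1.continuousOn hpc).add (ContinuousOn.mul hb1.1.continuousOn hqc)).sup
        ((ContinuousOn.mul ha2.1.continuousOn hpc).add (ContinuousOn.mul hb2.1.continuousOn hqc))))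
  have hle (s) (hs : s ∈ Icc 0 t) :=
    (max_le_iff.1 (hK ⟨s, hs, rfl⟩)).imp max_le_iff.1 max_le_iff.1
  exact comparison_principle ht (fun s hs => ⟨(hd1.2.1 s).le, (hle s hs).1.1⟩)
    (fun s hs => ⟨(hd2.2.1 s).le, (hle s hs).1.2⟩)
    (isProbabilityDensity_of_integrable_exp hJ1.2.1 hJ1.2.2.1 hJ1.2.2.2)
    (isProbabilityDensity_of_integrable_exp hJ2.2.1 hJ2.2.2.1 hJ2.2.2.2)
    (fun s hs => (cooperativeLipschitz_reaction₁ (mul_nonneg (ha1.2.1 s).le (hp s hs.1))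
      (mul_nonneg (hb1.2.1 s).le (hq s hs.1))).mono (hle s hs).2.1)
    (fun s hs => (cooperativeLipschitz_reaction₂ (mul_nonneg (ha2.2.1 s).le (hp s hs.1))
      (mul_nonneg (hb2.2.1 s).le (hq s hs.1))).mono (hle s hs).2.2)
    hlow.1 hlow.2.1 hup.1 hup.2.1 (fun x s => (hm01 x s).1) (fun x s => (hm01 x s).2)
    (fun x s => (hp01 x s).1) (fun x s => (hp01 x s).2) hlow.isSubsolution_fst
    hlow.isSubsolution_snd hup.isSupersolution_fst hup.isSupersolution_snd hinit x

theorem stmt5 (T : ℝ) (hT : 0 < T)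
    (d1 d2 r1 r2 a1 a2 b1 b2 J1 J2 : ℝ → ℝ)
    (hd1 : Continuous d1 ∧ (∀ t, 0 < d1 t) ∧ ∀ t, d1 (t + T) = d1 t)
    (hd2 : Continuous d2 ∧ (∀ t, 0 < d2 t) ∧ ∀ t, d2 (t + T) = d2 t)
    (hr1 : Continuous r1 ∧ (∀ t, 0 < r1 t) ∧ ∀ t, r1 (t + T) = r1 t)
    (hr2 : Continuous r2 ∧ (∀ t, 0 < r2 t) ∧ ∀ t, r2 (t + T) = r2 t)
    (ha1 : Continuous a1 ∧ (∀ t, 0 < a1 t) ∧ ∀ t, a1 (t + T) = a1 t)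
    (ha2 : Continuous a2 ∧ (∀ t, 0 < a2 t) ∧ ∀ t, a2 (t + T) = a2 t)
    (hb1 : Continuous b1 ∧ (∀ t, 0 < b1 t) ∧ ∀ t, b1 (t + T) = b1 t)
    (hb2 : Continuous b2 ∧ (∀ t, 0 < b2 t) ∧ ∀ t, b2 (t + T) = b2 t)
    (hJ1 : Measurable J1 ∧ (∀ x, 0 ≤ J1 x) ∧ (∫ x, J1 x) = 1 ∧
      ∀ l : ℝ, Integrable fun x => J1 x * Real.exp (-l * x))
    (hJ2 : Measurable J2 ∧ (∀ x, 0 ≤ J2 x) ∧ (∫ x, J2 x) = 1 ∧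
      ∀ l : ℝ, Integrable fun x => J2 x * Real.exp (-l * x))
    (φm ψm φp ψp : ℝ → ℝ → ℝ)
    (hlow : IsCauchyLower d1 d2 J1 J2 a1 b1 a2 b2
      (fun t => pfun r1 a1 T t) (fun t => pfun r2 b2 T t) φm ψm)
    (hup : IsCauchyUpper d1 d2 J1 J2 a1 b1 a2 b2
      (fun t => pfun r1 a1 T t) (fun t => pfun r2 b2 T t) φp ψp)
    (hm01 : ∀ x t, φm x t ∈ Set.Icc (0:ℝ) 1 ∧ ψm x t ∈ Set.Icc (0:ℝ) 1)
    (hp01 : ∀ x t, φp x t ∈ Set.Icc (0:ℝ) 1 ∧ ψp x t ∈ Set.Icc (0:ℝ) 1)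
    (hinit : ∀ x : ℝ, φm x 0 ≤ φp x 0 ∧ ψm x 0 ≤ ψp x 0) :
    ∀ x t : ℝ, 0 ≤ t → φm x t ≤ φp x t ∧ ψm x t ≤ ψp x t :=
  stmt5_general T d1 d2 r1 r2 a1 a2 b1 b2 J1 J2 hd1 hd2 hr1 hr2 ha1 ha2 hb1 hb2 hJ1 hJ2 φm ψm φp ψp
    hlow hup hm01 hp01 hinit
end

section
/- Assume: T > 0; d1, r1, r2, a1, a2, b1, b2 : ℝ → ℝ are continuous, positive, T-periodic; the kernel J1 is nonnegative, Lebesgue measurable, even (J1(x) = J1(−x)), satisfies ∫_ℝ J1(x) dx = 1 and ∫_ℝ J1(x)e^{−λx} dx < ∞ for every λ ∈ ℝ; and the bistability condition (A2) holds: ∫_0^T (a1(t)p(t) − b1(t)q(t)) dt < 0 and ∫_0^T (b2(t)q(t) − a2(t)p(t)) dt < 0. Define I1(μ, c) = ∫_0^T [d1(t)(∫_ℝ J1(y)e^{−μy} dy − 1) − cμ + a1(t)p(t) − b1(t)q(t)] dt. Then for every c ∈ ℝ: the function μ ↦ I1(μ, c) is convex on [0, ∞), I1(0, c) < 0, and there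 exists exactly one μ > 0 with I1(μ, c) = 0. -/
open MeasureTheory Set Filter

/-!
Writing `M μ = ∫ J₁(y) e^{-μy} dy`, linearity in `t` gives
`I₁(μ, c) = D (M μ - 1) - T c μ + K` with `D = ∫₀ᵀ d₁ > 0` and `K = ∫₀ᵀ (a₁p - b₁q) < 0` by (A2).
`M` is convex as an integral of convex functions and `M 0 = 1`; since `J₁` is even,
`M μ = ∫ J₁(y) cosh(μy) dy ≥ 1 + σμ²/4` with `σ = ∫ J₁(y) y² dy > 0`. Hence `I₁(·, c)` is convex,
negative at `0` and positive far out, and a convex function that is negative at `0` has exactly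
one zero on `(0, ∞)`.
-/

lemma two_add_sq_div_two_le_exp_add_exp_neg (x : ℝ) :
    2 + x ^ 2 / 2 ≤ Real.exp x + Real.exp (-x) := by
  rcases le_total 0 x with hx | hx
  · nlinarith [Real.quadratic_le_exp_of_nonneg hx, Real.add_one_le_exp (-x)]
  · nlinarith [Real.quadratic_le_exp_of_nonneg (neg_nonneg.2 hx), Real.add_one_le_exp x]

lemma exists_nonneg_quadratic_pos {a : ℝ} (ha : 0 < a) (b k : ℝ) :
    ∃ X, 0 ≤ X ∧ 0 < a * X ^ 2 + b * X + k := by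
  set X := max 1 ((|b| + |k| + 1) / a)
  have hX1 : 1 ≤ X := le_max_left _ _
  have haX : |b| + |k| + 1 ≤ a * X := by
    rw [← div_le_iff₀' ha]; exact le_max_right _ _
  refine ⟨X, zero_le_one.trans hX1, ?_⟩
  nlinarith [neg_abs_le b, neg_abs_le k, abs_nonneg k]

lemma existsUnique_pos_eq_zero_of_convexOn {f : ℝ → ℝ} (hf : ConvexOn ℝ (Ici 0) f)
    (hcont : ContinuousOn f (Ici 0)) (h0 : f 0 < 0) {X : ℝ} (hX0 : 0 ≤ X) (hX : 0 < f X) :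
    ∃! μ, 0 < μ ∧ f μ = 0 := by
  have no_two_roots : ∀ s t, 0 < s → s < t → f s = 0 → f t ≠ 0 := by
    intro s t hs hst hfs
    have hs_mem : s ∈ openSegment ℝ 0 t := by
      rw [openSegment_eq_Ioo (hs.trans hst)]; exact ⟨hs, hst⟩
    have := hf.lt_right_of_left_lt self_mem_Ici (mem_Ici.2 (hs.trans hst).le) hs_mem (hfs ▸ h0)
    linarith
  obtain ⟨μ, hμ, hfμ⟩ := intermediate_value_Ioo hX0 (hcont.mono Icc_subset_Ici_self)
    (show (0 : ℝ) ∈ Ioo (f 0) (f X) from ⟨h0, hX⟩)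
  refine ⟨μ, ⟨hμ.1, hfμ⟩, fun ν ⟨hν, hfν⟩ => ?_⟩
  rcases lt_trichotomy ν μ with h | h | h
  · exact absurd hfμ (no_two_roots ν μ hν h hfν)
  · exact h
  · exact absurd hfν (no_two_roots μ ν hμ.1 h hfμ)

section Kernel

variable {J : ℝ → ℝ}

lemma integrable_mul_sq_of_integrable_mul_exp (hJ : ∀ y, 0 ≤ J y)
    (hexp : ∀ l : ℝ, Integrable fun y => J y * Real.exp (-l * y)) :
    Integrable fun y => J y * y ^ 2 := by
  have hint : Integrable J := by simpa using hexp 0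
  refine (((hexp (-1)).add (hexp 1)).const_mul 2).mono'
    (hint.1.mul (continuous_pow 2).aestronglyMeasurable) ?_
  filter_upwards with y
  have hy := two_add_sq_div_two_le_exp_add_exp_neg y
  rw [Real.norm_eq_abs, abs_of_nonneg (mul_nonneg (hJ y) (sq_nonneg y))]
  simp only [Pi.add_apply, neg_mul, one_mul, neg_neg]
  nlinarith [mul_le_mul_of_nonneg_left hy (hJ y), hJ y]

lemma integral_mul_sq_pos (hJ : ∀ y, 0 ≤ J y) (hint : Integrable J) (hpos : 0 < ∫ y, J y)
    (hsq : Integrable fun y => J y * y ^ 2) : 0 < ∫ y, J y * y ^ 2 := by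
  have hsupp : 0 < volume (Function.support J) :=
    (integral_pos_iff_support_of_nonneg hJ hint).1 hpos
  rw [integral_pos_iff_support_of_nonneg (fun y => mul_nonneg (hJ y) (sq_nonneg y)) hsq]
  calc 0 < volume (Function.support J) := hsupp
    _ = volume (Function.support J \ {0}) := (measure_sdiff_null (measure_singleton 0)).symm
    _ ≤ volume (Function.support fun y => J y * y ^ 2) :=
      measure_mono fun y ⟨hy, hy0⟩ => mul_ne_zero hy (pow_ne_zero 2 hy0)

lemma convexOn_integral_mul_exp (hJ : ∀ y, 0 ≤ J y)
    (hexp : ∀ l : ℝ, Integrable fun y => J y * Real.exp (-l * y)) :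
    ConvexOn ℝ univ fun μ : ℝ => ∫ y, J y * Real.exp (-μ * y) := by
  refine ⟨convex_univ, fun μ _ ν _ a b ha hb hab => ?_⟩
  simp only [smul_eq_mul]
  have hpointwise : ∀ y, J y * Real.exp (-(a * μ + b * ν) * y) ≤
      a * (J y * Real.exp (-μ * y)) + b * (J y * Real.exp (-ν * y)) := fun y => by
    have hconv := convexOn_exp.2 (mem_univ (-μ * y)) (mem_univ (-ν * y)) ha hb hab
    simp only [smul_eq_mul] at hconv
    rw [show -(a * μ + b * ν) * y = a * (-μ * y) + b * (-ν * y) by ring]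
    nlinarith [mul_le_mul_of_nonneg_left hconv (hJ y)]
  calc ∫ y, J y * Real.exp (-(a * μ + b * ν) * y)
      ≤ ∫ y, (a * (J y * Real.exp (-μ * y)) + b * (J y * Real.exp (-ν * y))) :=
        integral_mono (hexp _) (((hexp μ).const_mul a).add ((hexp ν).const_mul b)) hpointwise
    _ = a * (∫ y, J y * Real.exp (-μ * y)) + b * ∫ y, J y * Real.exp (-ν * y) := by
        rw [integral_add ((hexp μ).const_mul a) ((hexp ν).const_mul b), integral_const_mul,
          integral_const_mul]

lemma one_add_sq_mul_le_integral_mul_exp (hJ : ∀ y, 0 ≤ J y) (heven : ∀ y, J y = J (-y))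
    (hJ1 : ∫ y, J y = 1) (hexp : ∀ l : ℝ, Integrable fun y => J y * Real.exp (-l * y))
    (μ : ℝ) : 1 + (∫ y, J y * y ^ 2) / 4 * μ ^ 2 ≤ ∫ y, J y * Real.exp (-μ * y) := by
  have hint : Integrable J := by simpa using hexp 0
  have hsq := integrable_mul_sq_of_integrable_mul_exp hJ hexp
  have hreflect : ∫ y, J y * Real.exp (-(-μ) * y) = ∫ y, J y * Real.exp (-μ * y) := by
    rw [← integral_neg_eq_self]
    congr 1 with y
    rw [← heven]
    ring_nf
  have hsum : 2 + (∫ y, J y * y ^ 2) / 2 * μ ^ 2 ≤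
      ∫ y, (J y * Real.exp (-μ * y) + J y * Real.exp (-(-μ) * y)) := by
    calc 2 + (∫ y, J y * y ^ 2) / 2 * μ ^ 2
        = ∫ y, (2 * J y + μ ^ 2 / 2 * (J y * y ^ 2)) := by
          rw [integral_add (hint.const_mul 2) (hsq.const_mul _), integral_const_mul,
            integral_const_mul, hJ1]
          ring
      _ ≤ ∫ y, (J y * Real.exp (-μ * y) + J y * Real.exp (-(-μ) * y)) := by
          refine integral_mono ((hint.const_mul 2).add (hsq.const_mul _))
            ((hexp μ).add (hexp (-μ))) fun y => ?_
          have hy := two_add_sq_div_two_le_exp_add_exp_neg (μ * y)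
          rw [neg_neg, neg_mul]
          nlinarith [mul_le_mul_of_nonneg_left hy (hJ y)]
  rw [integral_add (hexp μ) (hexp (-μ)), hreflect] at hsum
  linarith

end Kernel

lemma convexOn_Ici_and_existsUnique_pos_root {M : ℝ → ℝ} {D K σ : ℝ} (hD : 0 < D) (hK : K < 0)
    (hσ : 0 < σ) (hM : ConvexOn ℝ univ M) (hM0 : M 0 = 1) (hMge : ∀ μ, 1 + σ * μ ^ 2 ≤ M μ)
    (L : ℝ) :
    ConvexOn ℝ (Ici 0) (fun μ => D * (M μ - 1) - L * μ + K) ∧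
      D * (M 0 - 1) - L * 0 + K < 0 ∧ ∃! μ, 0 < μ ∧ D * (M μ - 1) - L * μ + K = 0 := by
  have hf0 : D * (M 0 - 1) - L * 0 + K < 0 := by simpa [hM0] using hK
  have hconv : ConvexOn ℝ (Ici 0) fun μ => D * (M μ - 1) - L * μ + K := by
    refine ⟨convex_Ici 0, fun x _ y _ a b ha hb hab => ?_⟩
    have hMxy := hM.2 (mem_univ x) (mem_univ y) ha hb hab
    obtain rfl : b = 1 - a := by linarith
    simp only [smul_eq_mul] at hMxy ⊢
    nlinarith [mul_le_mul_of_nonneg_left hMxy hD.le]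
  have hMcont : Continuous M := continuousOn_univ.1 (hM.continuousOn isOpen_univ)
  obtain ⟨X, hX0, hX⟩ := exists_nonneg_quadratic_pos (mul_pos hD hσ) (-L) K
  refine ⟨hconv, hf0, existsUnique_pos_eq_zero_of_convexOn hconv (by fun_prop) hf0 hX0 ?_⟩
  nlinarith [mul_le_mul_of_nonneg_left (hMge X) hD.le]

lemma intervalIntegral_mul_const_sub_const_add {d g : ℝ → ℝ} {a b : ℝ}
    (hd : IntervalIntegrable d volume a b) (hg : IntervalIntegrable g volume a b) (m k : ℝ) :
    ∫ t in a..b, (d t * m - k + g t) =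
      (∫ t in a..b, d t) * m - (b - a) * k + ∫ t in a..b, g t := by
  rw [intervalIntegral.integral_add ((hd.mul_const m).sub intervalIntegrable_const) hg,
    intervalIntegral.integral_sub (hd.mul_const m) intervalIntegrable_const,
    intervalIntegral.integral_mul_const, intervalIntegral.integral_const, smul_eq_mul]

theorem stmt15_general (T : ℝ) (hT : 0 < T) (d1 r1 r2 a1 a2 b1 b2 J1 : ℝ → ℝ)
    (hd1 : Continuous d1 ∧ (∀ t, 0 < d1 t) ∧ ∀ t, d1 (t + T) = d1 t)
    (hJ1 : Measurable J1 ∧ (∀ x, 0 ≤ J1 x) ∧ (∫ x, J1 x) = 1 ∧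
      ∀ l : ℝ, Integrable fun x => J1 x * Real.exp (-l * x))
    (hJ1even : ∀ x, J1 x = J1 (-x))
    (hA2 : (∫ t in (0:ℝ)..T, (a1 t * pfun r1 a1 T t - b1 t * pfun r2 b2 T t)) < 0 ∧
      (∫ t in (0:ℝ)..T, (b2 t * pfun r2 b2 T t - a2 t * pfun r1 a1 T t)) < 0)
    :
    ∀ c : ℝ,
      ConvexOn ℝ (Set.Ici 0) (fun μ : ℝ => ∫ t in (0:ℝ)..T,
        (d1 t * ((∫ y, J1 y * Real.exp (-μ * y)) - 1) - c * μ +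
          a1 t * pfun r1 a1 T t - b1 t * pfun r2 b2 T t)) ∧
      (∫ t in (0:ℝ)..T,
        (d1 t * ((∫ y, J1 y * Real.exp (-(0:ℝ) * y)) - 1) - c * 0 +
          a1 t * pfun r1 a1 T t - b1 t * pfun r2 b2 T t)) < 0 ∧
      ∃! μ : ℝ, 0 < μ ∧ (∫ t in (0:ℝ)..T,
        (d1 t * ((∫ y, J1 y * Real.exp (-μ * y)) - 1) - c * μ +
          a1 t * pfun r1 a1 T t - b1 t * pfun r2 b2 T t)) = 0 := by
  obtain ⟨-, hJ, hJmass, hexp⟩ := hJ1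
  intro c
  have hd : IntervalIntegrable d1 volume 0 T := hd1.1.intervalIntegrable 0 T
  have hI : ∀ μ : ℝ, (∫ t in (0:ℝ)..T, (d1 t * ((∫ y, J1 y * Real.exp (-μ * y)) - 1) - c * μ +
      a1 t * pfun r1 a1 T t - b1 t * pfun r2 b2 T t)) =
      (∫ t in (0:ℝ)..T, d1 t) * ((∫ y, J1 y * Real.exp (-μ * y)) - 1) - T * c * μ +
        ∫ t in (0:ℝ)..T, (a1 t * pfun r1 a1 T t - b1 t * pfun r2 b2 T t) := fun μ => by
    simp only [add_sub_assoc]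
    -- (A2) says this integral is nonzero, so its integrand is integrable.
    rw [intervalIntegral_mul_const_sub_const_add hd
      (intervalIntegral.intervalIntegrable_of_integral_ne_zero hA2.1.ne)]
    ring
  have hint : Integrable J1 := by simpa using hexp 0
  have hσ : 0 < ∫ y, J1 y * y ^ 2 := integral_mul_sq_pos hJ hint (hJmass ▸ one_pos)
    (integrable_mul_sq_of_integrable_mul_exp hJ hexp)
  simp only [hI]
  exact convexOn_Ici_and_existsUnique_pos_root
    (intervalIntegral.intervalIntegral_pos_of_pos hd hd1.2.1 hT) hA2.1 (div_pos hσ four_pos)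
    (convexOn_integral_mul_exp hJ hexp) (by simpa using hJmass)
    (one_add_sq_mul_le_integral_mul_exp hJ hJ1even hJmass hexp) (T * c)

theorem stmt15 (T : ℝ) (hT : 0 < T) (d1 r1 r2 a1 a2 b1 b2 J1 : ℝ → ℝ)
    (hd1 : Continuous d1 ∧ (∀ t, 0 < d1 t) ∧ ∀ t, d1 (t + T) = d1 t)
    (hr1 : Continuous r1 ∧ (∀ t, 0 < r1 t) ∧ ∀ t, r1 (t + T) = r1 t)
    (hr2 : Continuous r2 ∧ (∀ t, 0 < r2 t) ∧ ∀ t, r2 (t + T) = r2 t)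
    (ha1 : Continuous a1 ∧ (∀ t, 0 < a1 t) ∧ ∀ t, a1 (t + T) = a1 t)
    (ha2 : Continuous a2 ∧ (∀ t, 0 < a2 t) ∧ ∀ t, a2 (t + T) = a2 t)
    (hb1 : Continuous b1 ∧ (∀ t, 0 < b1 t) ∧ ∀ t, b1 (t + T) = b1 t)
    (hb2 : Continuous b2 ∧ (∀ t, 0 < b2 t) ∧ ∀ t, b2 (t + T) = b2 t)
    (hJ1 : Measurable J1 ∧ (∀ x, 0 ≤ J1 x) ∧ (∫ x, J1 x) = 1 ∧
      ∀ l : ℝ, Integrable fun x => J1 x * Real.exp (-l * x))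
    (hJ1even : ∀ x, J1 x = J1 (-x))
    (hA2 : (∫ t in (0:ℝ)..T, (a1 t * pfun r1 a1 T t - b1 t * pfun r2 b2 T t)) < 0 ∧
      (∫ t in (0:ℝ)..T, (b2 t * pfun r2 b2 T t - a2 t * pfun r1 a1 T t)) < 0)
    :
    ∀ c : ℝ,
      ConvexOn ℝ (Set.Ici 0) (fun μ : ℝ => ∫ t in (0:ℝ)..T,
        (d1 t * ((∫ y, J1 y * Real.exp (-μ * y)) - 1) - c * μ +
          a1 t * pfun r1 a1 T t - b1 t * pfun r2 b2 T t)) ∧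
      (∫ t in (0:ℝ)..T,
        (d1 t * ((∫ y, J1 y * Real.exp (-(0:ℝ) * y)) - 1) - c * 0 +
          a1 t * pfun r1 a1 T t - b1 t * pfun r2 b2 T t)) < 0 ∧
      ∃! μ : ℝ, 0 < μ ∧ (∫ t in (0:ℝ)..T,
        (d1 t * ((∫ y, J1 y * Real.exp (-μ * y)) - 1) - c * μ +
          a1 t * pfun r1 a1 T t - b1 t * pfun r2 b2 T t)) = 0 :=
  stmt15_general T hT d1 r1 r2 a1 a2 b1 b2 J1 hd1 hJ1 hJ1even hA2
end
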